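/- Let (X, Σ, μ) be a finite measure space, H a separable Hilbert space, and v_n, v ∈ L¹(X, μ; H) with v_n converging weakly to v in L¹(X, μ; H). If φ : H → [0, +∞] is convex and lower semicontinuous and g ∈ L^∞(X, μ) with g ≥ 0 μ-a.e., then ∫ g·φ(v) dμ ≤ liminf_{n→∞} ∫ g·φ(v_n) dμ. -/

import Mathlib

/-!
Mazur: the functional `w ↦ ∫⁻ g φ(w)` on `L¹` is convex, and it is lower semicontinuous for the
norm topology, because a norm-convergent sequence has an a.e. convergent subsequence, along which
Fatou's lemma applies. Its sublevel sets are therefore closed and convex, hence weakly closed, so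
a weak limit of points of a sublevel set lies in it.
-/

open MeasureTheory Filter Topology
open scoped ENNReal

theorem ENNReal.mul_liminf_le_liminf_mul {ι : Type*} {l : Filter ι} (a : ℝ≥0∞) (u : ι → ℝ≥0∞) :
    a * liminf u l ≤ liminf (fun i => a * u i) l := by
  simp only [liminf_eq_iSup_iInf, ENNReal.mul_iSup]
  exact iSup₂_mono fun s _ => le_iInf₂ fun i hi => mul_le_mul_right (iInf₂_le i hi) a

theorem LowerSemicontinuous.le_liminf_comp {α β γ : Type*} [TopologicalSpace α]
    [CompleteLinearOrder γ] {f : α → γ} (hf : LowerSemicontinuous f) {u : β → α} {l : Filter β}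
    {a : α} (hu : Tendsto u l (𝓝 a)) : f a ≤ liminf (fun i => f (u i)) l := by
  rw [le_liminf_iff]
  exact fun _ hy => hu.eventually (hf a _ hy)

theorem LowerSemicontinuous.aemeasurable_mul_comp {X H : Type*} [MeasurableSpace X]
    {μ : Measure X} [TopologicalSpace H] [TopologicalSpace.PseudoMetrizableSpace H]
    {φ : H → ℝ≥0∞} (hφ : LowerSemicontinuous φ) {ρ : X → ℝ≥0∞} (hρ : AEMeasurable ρ μ)
    {f : X → H} (hf : AEStronglyMeasurable f μ) : AEMeasurable (fun x => ρ x * φ (f x)) μ := by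
  borelize H
  exact hρ.mul (hφ.measurable.comp_aemeasurable hf.aemeasurable)

/-- `ConvexOn ℝ` does not apply here, as `ℝ≥0∞` is not an `ℝ`-module. -/
def ConvexENNReal {E : Type*} [AddCommGroup E] [Module ℝ E] (F : E → ℝ≥0∞) : Prop :=
  ∀ a b : E, ∀ t : ℝ, 0 ≤ t → t ≤ 1 →
    F (t • a + (1 - t) • b) ≤ ENNReal.ofReal t * F a + ENNReal.ofReal (1 - t) * F b

theorem ConvexENNReal.convex_setOf_le {E : Type*} [AddCommGroup E] [Module ℝ E] {F : E → ℝ≥0∞}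
    (hF : ConvexENNReal F) (c : ℝ≥0∞) : Convex ℝ {x | F x ≤ c} := by
  intro x hx y hy s t hs ht hst
  obtain rfl : t = 1 - s := by linarith
  calc F (s • x + (1 - s) • y)
      ≤ ENNReal.ofReal s * F x + ENNReal.ofReal (1 - s) * F y := hF x y s hs (by linarith)
    _ ≤ ENNReal.ofReal s * c + ENNReal.ofReal (1 - s) * c := by gcongr <;> assumption
    _ = c := by
      rw [← add_mul, ← ENNReal.ofReal_add hs ht, add_sub_cancel, ENNReal.ofReal_one, one_mul]

section WeakConvergence

variable {E : Type*} [AddCommGroup E] [Module ℝ E] [TopologicalSpace E]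
  {ι : Type*} {l : Filter ι} {v : ι → E} {x : E}

theorem tendsto_toWeakSpace_of_forall_dual_tendsto
    (hv : ∀ f : StrongDual ℝ E, Tendsto (fun i => f (v i)) l (𝓝 (f x))) :
    Tendsto (fun i => toWeakSpace ℝ E (v i)) l (𝓝 (toWeakSpace ℝ E x)) :=
  (IsInducing.induced (fun (x : WeakSpace ℝ E) (f : StrongDual ℝ E) => f x)).tendsto_nhds_iff.2
    (tendsto_pi_nhds.2 hv)

variable [IsTopologicalAddGroup E] [ContinuousSMul ℝ E] [LocallyConvexSpace ℝ E]

theorem IsClosed.mem_of_frequently_of_forall_dual_tendsto {s : Set E} (hs : IsClosed s)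
    (hconv : Convex ℝ s) (hv : ∀ f : StrongDual ℝ E, Tendsto (fun i => f (v i)) l (𝓝 (f x)))
    (hfreq : ∃ᶠ i in l, v i ∈ s) : x ∈ s := by
  have hweak : IsClosed (toWeakSpace ℝ E '' s) := by
    rw [← closure_eq_iff_isClosed, ← hconv.toWeakSpace_closure ℝ, hs.closure_eq]
  have hlim := hweak.mem_of_frequently_of_tendsto
    (hfreq.mono fun i hi => Set.mem_image_of_mem _ hi)
    (tendsto_toWeakSpace_of_forall_dual_tendsto hv)
  exact (toWeakSpace ℝ E).injective.mem_set_image.1 hlim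

theorem LowerSemicontinuous.le_liminf_of_forall_dual_tendsto {F : E → ℝ≥0∞}
    (hF : LowerSemicontinuous F) (hconv : ConvexENNReal F)
    (hv : ∀ f : StrongDual ℝ E, Tendsto (fun i => f (v i)) l (𝓝 (f x))) :
    F x ≤ liminf (fun i => F (v i)) l := by
  refine le_of_forall_gt_imp_ge_of_dense fun c hc => ?_
  have hfreq : ∃ᶠ i in l, F (v i) ≤ c :=
    (frequently_lt_of_liminf_lt (by isBoundedDefault) hc).mono fun _ hi => hi.le
  exact (hF.isClosed_preimage c).mem_of_frequently_of_forall_dual_tendsto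
    (hconv.convex_setOf_le c) hv hfreq

end WeakConvergence

namespace MeasureTheory.Lp

variable {X : Type*} [MeasurableSpace X] {μ : Measure X}
  {H : Type*} [NormedAddCommGroup H] {p : ℝ≥0∞} {ρ : X → ℝ≥0∞} {φ : H → ℝ≥0∞}

theorem convexENNReal_lintegral_mul_comp [NormedSpace ℝ H] (hρ : AEMeasurable ρ μ)
    (hφ : LowerSemicontinuous φ) (hφconv : ConvexENNReal φ) :
    ConvexENNReal fun w : Lp H p μ => ∫⁻ x, ρ x * φ (w x) ∂μ := by
  intro a b t ht0 ht1
  have hcoe : ∀ᵐ x ∂μ, (t • a + (1 - t) • b : Lp H p μ) x = t • a x + (1 - t) • b x := by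
    filter_upwards [Lp.coeFn_add (t • a) ((1 - t) • b), Lp.coeFn_smul t a,
      Lp.coeFn_smul (1 - t) b] with x h1 h2 h3
    simp only [h1, Pi.add_apply, h2, h3, Pi.smul_apply]
  calc ∫⁻ x, ρ x * φ ((t • a + (1 - t) • b : Lp H p μ) x) ∂μ
      ≤ ∫⁻ x, ENNReal.ofReal t * (ρ x * φ (a x))
          + ENNReal.ofReal (1 - t) * (ρ x * φ (b x)) ∂μ := by
        refine lintegral_mono_ae (hcoe.mono fun x hx => ?_)
        rw [hx, mul_left_comm, mul_left_comm _ (ρ x), ← mul_add]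
        exact mul_le_mul_right (hφconv (a x) (b x) t ht0 ht1) _
    _ = ENNReal.ofReal t * ∫⁻ x, ρ x * φ (a x) ∂μ
          + ENNReal.ofReal (1 - t) * ∫⁻ x, ρ x * φ (b x) ∂μ := by
        have ha := hφ.aemeasurable_mul_comp hρ (Lp.aestronglyMeasurable a)
        rw [lintegral_add_left' (ha.const_mul _),
          lintegral_const_mul' _ _ ENNReal.ofReal_ne_top,
          lintegral_const_mul' _ _ ENNReal.ofReal_ne_top]

theorem lowerSemicontinuous_lintegral_mul_comp [Fact (1 ≤ p)] (hρ : AEMeasurable ρ μ)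
    (hφ : LowerSemicontinuous φ) :
    LowerSemicontinuous fun w : Lp H p μ => ∫⁻ x, ρ x * φ (w x) ∂μ := by
  refine lowerSemicontinuous_iff_isClosed_preimage.2 fun c => IsSeqClosed.isClosed ?_
  intro w v hw hwv
  obtain ⟨ns, -, hae⟩ := (tendstoInMeasure_of_tendsto_Lp hwv).exists_seq_tendsto_ae
  calc ∫⁻ x, ρ x * φ (v x) ∂μ
      ≤ ∫⁻ x, liminf (fun i => ρ x * φ (w (ns i) x)) atTop ∂μ := by
        refine lintegral_mono_ae (hae.mono fun x hx => ?_)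
        exact (mul_le_mul_right (hφ.le_liminf_comp hx) _).trans
          (ENNReal.mul_liminf_le_liminf_mul _ _)
    _ ≤ liminf (fun i => ∫⁻ x, ρ x * φ (w (ns i) x) ∂μ) atTop :=
        lintegral_liminf_le' fun i => hφ.aemeasurable_mul_comp hρ (Lp.aestronglyMeasurable _)
    _ ≤ c := liminf_le_of_frequently_le (Frequently.of_forall fun i => hw (ns i))
        (by isBoundedDefault)

end MeasureTheory.Lp

theorem weak_lsc_convex_integral_general
    {X : Type*} [MeasurableSpace X] (μ : Measure X)
    {H : Type*} [NormedAddCommGroup H] [InnerProductSpace ℝ H]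
    (v : ℕ → Lp H 1 μ) (vlim : Lp H 1 μ)
    (hweak : ∀ f : Lp H 1 μ →L[ℝ] ℝ,
      Tendsto (fun n => f (v n)) atTop (𝓝 (f vlim)))
    (φ : H → ℝ≥0∞)
    (hφconv : ∀ a b : H, ∀ t : ℝ, 0 ≤ t → t ≤ 1 →
      φ (t • a + (1 - t) • b) ≤ ENNReal.ofReal t * φ a + ENNReal.ofReal (1 - t) * φ b)
    (hφlsc : LowerSemicontinuous φ)
    (g : X → ℝ) (hg : MemLp g ⊤ μ) :
    ∫⁻ x, ENNReal.ofReal (g x) * φ (vlim x) ∂μ ≤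
      atTop.liminf fun n => ∫⁻ x, ENNReal.ofReal (g x) * φ ((v n) x) ∂μ := by
  have hρ : AEMeasurable (fun x => ENNReal.ofReal (g x)) μ :=
    hg.aestronglyMeasurable.aemeasurable.ennreal_ofReal
  exact (Lp.lowerSemicontinuous_lintegral_mul_comp hρ hφlsc).le_liminf_of_forall_dual_tendsto
    (Lp.convexENNReal_lintegral_mul_comp hρ hφlsc hφconv) hweak

theorem weak_lsc_convex_integral
    {X : Type*} [MeasurableSpace X] (μ : Measure X) [IsFiniteMeasure μ]
    {H : Type*} [NormedAddCommGroup H] [InnerProductSpace ℝ H]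
    [TopologicalSpace.SeparableSpace H]
    (v : ℕ → Lp H 1 μ) (vlim : Lp H 1 μ)
    (hweak : ∀ f : Lp H 1 μ →L[ℝ] ℝ,
      Tendsto (fun n => f (v n)) atTop (𝓝 (f vlim)))
    (φ : H → ℝ≥0∞)
    (hφconv : ∀ a b : H, ∀ t : ℝ, 0 ≤ t → t ≤ 1 →
      φ (t • a + (1 - t) • b) ≤ ENNReal.ofReal t * φ a + ENNReal.ofReal (1 - t) * φ b)
    (hφlsc : LowerSemicontinuous φ)
    (g : X → ℝ) (hg : MemLp g ⊤ μ) (hg0 : 0 ≤ᵐ[μ] g) :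
    ∫⁻ x, ENNReal.ofReal (g x) * φ (vlim x) ∂μ ≤
      atTop.liminf fun n => ∫⁻ x, ENNReal.ofReal (g x) * φ ((v n) x) ∂μ :=
  weak_lsc_convex_integral_general μ v vlim hweak φ hφconv hφlsc g hg
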